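/- arXiv:2301.08793 — 7 statements merged into one kernel-verified Lean document; each statement's English description precedes it below -/
import Mathlib

section
/- If S is a left legal semigroup satisfying the identity ab = a²b, then the map φ : S → S given by φ(a) = a² is a homomorphism of S onto S² that fixes every element of S². -/
/-! Left legality gives `a b b = a b a b = a (b a b) = a (b a) = a b`, so `(a b)(a b) = a b a b = a b`:
every element of `S²` is idempotent. Hence `S²` is exactly the set of squares and squaring fixes it,
and `(a b)² = a b = a² b = a² b²` makes squaring multiplicative. -/

section LeftLegal

variable {S : Type*} [Semigroup S]

theorem mul_mul_self_of_leftLegal (hleg : ∀ a b : S, a * b * a = a * b) (a b : S) :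
    a * b * b = a * b :=
  calc a * b * b = a * b * a * b := by rw [hleg a b]
    _ = a * (b * a * b) := by simp only [mul_assoc]
    _ = a * (b * a) := by rw [hleg b a]
    _ = a * b := by rw [← mul_assoc, hleg a b]

theorem isIdempotentElem_mul_of_leftLegal (hleg : ∀ a b : S, a * b * a = a * b) (a b : S) :
    IsIdempotentElem (a * b) :=
  calc a * b * (a * b) = a * b * a * b := (mul_assoc _ _ _).symm
    _ = a * b * b := by rw [hleg a b]
    _ = a * b := mul_mul_self_of_leftLegal hleg a b

theorem range_mul_self_eq_of_leftLegal (hleg : ∀ a b : S, a * b * a = a * b) :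
    Set.range (fun a : S => a * a) = {x : S | ∃ a b : S, x = a * b} := by
  ext x
  constructor
  · rintro ⟨a, rfl⟩
    exact ⟨a, a, rfl⟩
  · rintro ⟨a, b, rfl⟩
    exact ⟨a * b, isIdempotentElem_mul_of_leftLegal hleg a b⟩

theorem mul_mul_mul_self_of_leftLegal (hleg : ∀ a b : S, a * b * a = a * b)
    (hsq : ∀ a b : S, a * b = a * a * b) (a b : S) :
    a * b * (a * b) = a * a * (b * b) :=
  calc a * b * (a * b) = a * b := isIdempotentElem_mul_of_leftLegal hleg a b
    _ = a * a * b * b := by rw [← hsq, mul_mul_self_of_leftLegal hleg]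
    _ = a * a * (b * b) := mul_assoc _ _ _

end LeftLegal

/-- In a left legal semigroup satisfying ab = a²b, the squaring
map is a homomorphism of S onto S² fixing every element of S². -/
theorem stmt_5 {S : Type*} [Semigroup S]
    (hleg : ∀ a b : S, a * b * a = a * b)
    (hsq : ∀ a b : S, a * b = a * a * b) :
    (∀ a b : S, (a * b) * (a * b) = (a * a) * (b * b)) ∧
    (Set.range (fun a : S => a * a) = {x : S | ∃ a b : S, x = a * b}) ∧
    (∀ x : S, (∃ a b : S, x = a * b) → x * x = x) := by
  refine ⟨mul_mul_mul_self_of_leftLegal hleg hsq, range_mul_self_eq_of_leftLegal hleg, ?_⟩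
  rintro _ ⟨a, b, rfl⟩
  exact isIdempotentElem_mul_of_leftLegal hleg a b
end

section
/- A semigroup with at least two elements is subdirectly irreducible and satisfies the identity ab = ac if and only if it is either a two-element left zero semigroup or a two-element zero semigroup. -/
/-- A semigroup is subdirectly irreducible iff the intersection of all its
non-trivial congruences is non-trivial. -/
def SubdirectlyIrreducibleSemigroup (S : Type*) [Semigroup S] : Prop :=
  ∃ a b : S, a ≠ b ∧ ∀ c : Con S, c ≠ ⊥ → c a b

/-! If `ab = ac` holds, every product `u * w` equals `u * u`, so an equivalence relation is a
congruence as soon as it is compatible with squaring. Hence two elements `p ≠ q` that have the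
same square, or are both idempotent, can be collapsed on their own, and in a subdirectly
irreducible semigroup `{p, q}` must then be the monolith pair `{a, b}`. Squares are idempotent,
and either every element is idempotent or all squares coincide; either way every pair can be
collapsed, so `S = {a, b}`, and it is a left zero semigroup (`u * v = u * u = u`) or a zero
semigroup (`u * v = u * u = a * a`). -/

theorem update_id_eq_update_id_iff {α : Type*} [DecidableEq α] {p q u v : α} :
    Function.update id q p u = Function.update id q p v ↔ u = v ∨ s(u, v) = s(p, q) := by
  simp only [Function.update_apply, id, Sym2.eq_iff]
  split_ifs <;> grind

theorem Con.exists_ne_rel_of_ne_bot {M : Type*} [Mul M] {c : Con M} (hc : c ≠ ⊥) :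
    ∃ u v, u ≠ v ∧ c u v := by
  by_contra! h
  exact hc (le_antisymm (fun u v huv => by_contra fun hne => h u v hne huv) bot_le)

namespace LeftConstantSemigroup

variable {S : Type*} [Semigroup S]

theorem mul_self_mul_self (h : ∀ a b c : S, a * b = a * c) (a : S) :
    a * a * (a * a) = a * a := by
  rw [mul_assoc]; exact h a _ a

def kerCon (h : ∀ a b c : S, a * b = a * c) {T : Type*} (f : S → T)
    (hf : ∀ u v, f u = f v → f (u * u) = f (v * v)) : Con S where
  toSetoid := Setoid.ker f
  mul' {u v w x} huv _ := by
    show f (u * w) = f (v * x)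
    rw [h u w u, h v x v]
    exact hf u v huv

noncomputable def collapseCon (h : ∀ a b c : S, a * b = a * c) (p q : S)
    (hpq : p * p = q * q ∨ (p * p = p ∧ q * q = q)) : Con S := by
  classical
  refine kerCon h (Function.update id q p) fun u v huv => ?_
  rcases update_id_eq_update_id_iff.1 huv with rfl | huv
  · rfl
  rcases Sym2.eq_iff.1 huv with ⟨rfl, rfl⟩ | ⟨rfl, rfl⟩ <;>
  rcases hpq with hpq | ⟨hp, hq⟩
  · rw [hpq]
  · rw [hp, hq, update_id_eq_update_id_iff]; exact Or.inr rfl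
  · rw [hpq]
  · rw [hp, hq, update_id_eq_update_id_iff]; exact Or.inr Sym2.eq_swap

theorem collapseCon_iff (h : ∀ a b c : S, a * b = a * c) {p q : S}
    (hpq : p * p = q * q ∨ (p * p = p ∧ q * q = q)) {u v : S} :
    collapseCon h p q hpq u v ↔ u = v ∨ s(u, v) = s(p, q) := by
  classical
  exact update_id_eq_update_id_iff

theorem monolith_eq_of_mul_self (h : ∀ a b c : S, a * b = a * c) {a b : S} (hab : a ≠ b)
    (hmono : ∀ c : Con S, c ≠ ⊥ → c a b) {p q : S} (hpq : p ≠ q)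
    (hsq : p * p = q * q ∨ (p * p = p ∧ q * q = q)) : s(a, b) = s(p, q) := by
  have hne : collapseCon h p q hsq ≠ ⊥ := fun hbot => by
    have hrel := (collapseCon_iff h hsq).2 (Or.inr rfl)
    rw [hbot] at hrel
    exact hpq hrel
  exact ((collapseCon_iff h hsq).1 (hmono _ hne)).resolve_left hab

/-- A non-idempotent `w` collapses with its square `w * w`, which forces `a * a = b * b`;
then two distinct idempotent squares would have to be `a` and `b`. -/
theorem forall_mul_self_eq_or_forall_mul_self_eq_mul_self (h : ∀ a b c : S, a * b = a * c)
    {a b : S} (hab : a ≠ b) (hmono : ∀ c : Con S, c ≠ ⊥ → c a b) :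
    (∀ x : S, x * x = x) ∨ ∀ x y : S, x * x = y * y := by
  by_contra! ⟨⟨w, hw⟩, ⟨x, y, hxy⟩⟩
  have hwab := monolith_eq_of_mul_self h hab hmono (Ne.symm hw)
    (Or.inl (mul_self_mul_self h w).symm)
  have habsq : a * a = b * b := by
    obtain ⟨ha, hb⟩ | ⟨ha, hb⟩ := Sym2.eq_iff.1 hwab <;> rw [ha, hb, mul_self_mul_self h w]
  have hxyab := monolith_eq_of_mul_self h hab hmono hxy
    (Or.inr ⟨mul_self_mul_self h x, mul_self_mul_self h y⟩)
  apply hab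
  rcases Sym2.eq_iff.1 hxyab with ⟨rfl, rfl⟩ | ⟨rfl, rfl⟩
  · rw [← mul_self_mul_self h x, habsq, mul_self_mul_self h y]
  · rw [← mul_self_mul_self h y, habsq, mul_self_mul_self h x]

theorem eq_or_eq_of_forall_mul_self (h : ∀ a b c : S, a * b = a * c)
    {a b : S} (hab : a ≠ b) (hmono : ∀ c : Con S, c ≠ ⊥ → c a b)
    (hsq : ∀ p q : S, p * p = q * q ∨ (p * p = p ∧ q * q = q)) (z : S) : z = a ∨ z = b := by
  by_contra! ⟨hza, hzb⟩
  rcases Sym2.eq_iff.1 (monolith_eq_of_mul_self h hab hmono hza (hsq z a)) with ⟨rfl, -⟩ | ⟨-, rfl⟩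
  · exact hza rfl
  · exact hzb rfl

end LeftConstantSemigroup

theorem subdirectlyIrreducibleSemigroup_of_forall_eq_or_eq {S : Type*} [Semigroup S]
    {x y : S} (hxy : x ≠ y) (hS : ∀ z : S, z = x ∨ z = y) : SubdirectlyIrreducibleSemigroup S := by
  refine ⟨x, y, hxy, fun c hc => ?_⟩
  obtain ⟨u, v, huv, hc⟩ := Con.exists_ne_rel_of_ne_bot hc
  rcases hS u with rfl | rfl <;> rcases hS v with rfl | rfl
  exacts [absurd rfl huv, hc, c.symm hc, absurd rfl huv]

open LeftConstantSemigroup in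
theorem stmt_10_general {S : Type*} [Semigroup S] :
    (SubdirectlyIrreducibleSemigroup S ∧ ∀ a b c : S, a * b = a * c) ↔
    ((∃ x y : S, x ≠ y ∧ ∀ z : S, z = x ∨ z = y) ∧
      ((∀ a b : S, a * b = a) ∨ (∃ z : S, ∀ a b : S, a * b = z))) := by
  constructor
  · rintro ⟨⟨a, b, hab, hmono⟩, h⟩
    have hsq := forall_mul_self_eq_or_forall_mul_self_eq_mul_self h hab hmono
    refine ⟨⟨a, b, hab, eq_or_eq_of_forall_mul_self h hab hmono fun p q => ?_⟩, ?_⟩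
    · rcases hsq with hidem | hsq
      exacts [Or.inr ⟨hidem p, hidem q⟩, Or.inl (hsq p q)]
    · rcases hsq with hidem | hsq
      · exact Or.inl fun u v => by rw [h u v u, hidem]
      · exact Or.inr ⟨a * a, fun u v => by rw [h u v u, hsq u a]⟩
  · rintro ⟨⟨x, y, hxy, hS⟩, hmul⟩
    refine ⟨subdirectlyIrreducibleSemigroup_of_forall_eq_or_eq hxy hS, fun a b c => ?_⟩
    rcases hmul with hleft | ⟨z, hzero⟩
    · rw [hleft, hleft]
    · rw [hzero, hzero]

/-- A semigroup with at least two elements is subdirectly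
irreducible and satisfies ab = ac iff it is a two-element left zero semigroup
or a two-element zero semigroup. -/
theorem stmt_10 {S : Type*} [Semigroup S]
    (htwo : ∃ a b : S, a ≠ b) :
    (SubdirectlyIrreducibleSemigroup S ∧ ∀ a b c : S, a * b = a * c) ↔
    ((∃ x y : S, x ≠ y ∧ ∀ z : S, z = x ∨ z = y) ∧
      ((∀ a b : S, a * b = a) ∨ (∃ z : S, ∀ a b : S, a * b = z))) :=
  stmt_10_general
end

section
/- Every left legal semigroup is a Putcha semigroup: if a ∈ S¹bS¹ then a^m ∈ S¹b²S¹ for some positive integer m. -/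
/-!
Left legality makes `b` a right identity for every element of the form `b * t` or `s * b * t`,
since `b * t * b = b * t`; such an element `a` then satisfies `a = a * (b * b)`. For `a = s * b`
one uses the square instead: `s * b * (s * b) = s * b * b`.
-/

/-- `spow a k` is the `k`-th power of `a` in a semigroup, for `k ≥ 1`
(with `spow a 0` defined to be `a` as a junk value). -/
def spow {S : Type*} [Semigroup S] (a : S) : ℕ → S
  | 0 => a
  | 1 => a
  | (n + 2) => a * spow a (n + 1)

section LeftLegal

variable {S : Type*} [Semigroup S]

theorem mul_mul_self_eq_of_mul_eq {a b : S} (h : a * b = a) : a * (b * b) = a := by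
  rw [← mul_assoc, h, h]

theorem mul_mul_mul_of_leftLegal (hleg : ∀ a b : S, a * b * a = a * b) (s b t : S) :
    s * b * t * b = s * b * t := by
  rw [mul_assoc s b t, mul_assoc, hleg]

theorem mul_self_mul_of_leftLegal (hleg : ∀ a b : S, a * b * a = a * b) (s b : S) :
    s * b * (s * b) = s * (b * b) := by
  rw [← mul_assoc, hleg, mul_assoc]

end LeftLegal

/-- Every left legal semigroup is a Putcha semigroup:
if a ∈ S¹bS¹ then a^m ∈ S¹b²S¹ for some m ≥ 1. -/
theorem stmt_12 {S : Type*} [Semigroup S]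
    (hleg : ∀ a b : S, a * b * a = a * b) :
    ∀ a b : S,
      (a = b ∨ (∃ s : S, a = b * s) ∨ (∃ s : S, a = s * b) ∨
        (∃ s t : S, a = s * b * t)) →
      ∃ m : ℕ, 1 ≤ m ∧
        (spow a m = b * b ∨ (∃ s : S, spow a m = (b * b) * s) ∨
          (∃ s : S, spow a m = s * (b * b)) ∨
          (∃ s t : S, spow a m = s * (b * b) * t)) := by
  intro a b h
  rcases h with rfl | ⟨s, rfl⟩ | ⟨s, rfl⟩ | ⟨s, t, rfl⟩
  · exact ⟨2, one_le_two, Or.inl rfl⟩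
  · exact ⟨1, le_rfl, Or.inr <| Or.inr <| Or.inl
      ⟨b * s, (mul_mul_self_eq_of_mul_eq (hleg b s)).symm⟩⟩
  · exact ⟨2, one_le_two, Or.inr <| Or.inr <| Or.inl
      ⟨s, mul_self_mul_of_leftLegal hleg s b⟩⟩
  · exact ⟨1, le_rfl, Or.inr <| Or.inr <| Or.inl
      ⟨s * b * t, (mul_mul_self_eq_of_mul_eq (mul_mul_mul_of_leftLegal hleg s b t)).symm⟩⟩
end

section
/- Let S be a left legal semigroup. Define η = {(a,b) : ∃n ≥ 1, a^n ∈ SbS and b^n ∈ SaS} and τ = {(a,b) : ∃n ≥ 1, a^n b = a^{n+1} and b^n a = b^{n+1}}. Then η = τ. -/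
section LeftLegal

variable {S : Type*} [Semigroup S]

theorem spow_add_two (hleg : ∀ a b : S, a * b * a = a * b) (a : S) (n : ℕ) :
    spow a (n + 2) = a * a := by
  induction n with
  | zero => rfl
  | succ m ih =>
    change a * spow a (m + 2) = a * a
    rw [ih, ← mul_assoc, hleg]

theorem mul_eq_self_of_eq_mul_mul (hleg : ∀ a b : S, a * b * a = a * b) {e b x y : S}
    (he : e * e = e) (h : e = x * b * y) : e * b = e := by
  have hexb : e * x * b = e := by
    rw [mul_assoc, h, hleg, ← h]
  have hex : e * x = e :=
    calc e * x = e * x * b * (e * x) := by rw [hexb, ← mul_assoc, he]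
      _ = e := by rw [hleg, hexb]
  rwa [hex] at hexb

theorem exists_mul_self_eq_of_spow_eq (hleg : ∀ a b : S, a * b * a = a * b) {a b x y : S}
    {n : ℕ} (hn : 1 ≤ n) (h : spow a n = x * b * y) : ∃ p q : S, a * a = p * b * q := by
  match n, hn with
  | 1, _ =>
    refine ⟨a * x, y, ?_⟩
    simp only [mul_assoc] at h ⊢
    exact congrArg (a * ·) h
  | m + 2, _ => exact ⟨x, y, (spow_add_two hleg a m).symm.trans h⟩

theorem spow_two_mul_eq_spow_three (hleg : ∀ a b : S, a * b * a = a * b) {a b x y : S}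
    {n : ℕ} (hn : 1 ≤ n) (h : spow a n = x * b * y) : spow a 2 * b = spow a 3 := by
  obtain ⟨p, q, hpq⟩ := exists_mul_self_eq_of_spow_eq hleg hn h
  have hidem : a * a * (a * a) = a * a := by rw [← mul_assoc, hleg, hleg]
  rw [spow_add_two hleg a 1]
  exact mul_eq_self_of_eq_mul_mul hleg hidem hpq

end LeftLegal

/-- In a left legal semigroup, the relations
η = {(a,b) : ∃ n ≥ 1, a^n ∈ SbS ∧ b^n ∈ SaS} and
τ = {(a,b) : ∃ n ≥ 1, a^n b = a^{n+1} ∧ b^n a = b^{n+1}} coincide. -/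
theorem stmt_13 {S : Type*} [Semigroup S]
    (hleg : ∀ a b : S, a * b * a = a * b) :
    ∀ a b : S,
      (∃ n : ℕ, 1 ≤ n ∧ (∃ x y : S, spow a n = x * b * y) ∧
        (∃ x y : S, spow b n = x * a * y)) ↔
      (∃ n : ℕ, 1 ≤ n ∧ spow a n * b = spow a (n + 1) ∧
        spow b n * a = spow b (n + 1)) := by
  intro a b
  constructor
  · rintro ⟨n, hn, ⟨x, y, ha⟩, ⟨u, v, hb⟩⟩
    exact ⟨2, by norm_num, spow_two_mul_eq_spow_three hleg hn ha,
      spow_two_mul_eq_spow_three hleg hn hb⟩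
  · rintro ⟨n, hn, ha, hb⟩
    exact ⟨n + 1, by omega, ⟨spow a n, spow a n, by rw [← ha, hleg]⟩,
      ⟨spow b n, spow b n, by rw [← hb, hleg]⟩⟩
end

section
/- For a left legal semigroup S, the relation τ defined by (a,b) ∈ τ iff a²b = a² and b²a = b² is a congruence on S whose quotient is a semilattice (commutative idempotent semigroup). -/
/-!
Write `a ≼ b` (`SqAbsorbs a b`) for `a * a * b = a * a`. In a left legal semigroup `≼` is a
preorder compatible with multiplication on both sides, because `a x a = a x` lets `a²` be moved
past any prefix `a x`. Hence its symmetric part `τ` is a congruence. Moreover `ab ≼ ba` (as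
`(ab)² = ab²`) and `a ≼ a² ≼ a`, so the quotient is commutative and idempotent.
-/

namespace LeftLegal

variable {S : Type*} [Semigroup S]

def SqAbsorbs (a b : S) : Prop := a * a * b = a * a

theorem SqAbsorbs.trans {a b c : S} (hab : SqAbsorbs a b) (hbc : SqAbsorbs b c) :
    SqAbsorbs a c := by
  have hab2 : a * a * (b * b) = a * a := by rw [← mul_assoc, hab, hab]
  unfold SqAbsorbs
  calc a * a * c = a * a * (b * b) * c := by rw [hab2]
    _ = a * a * (b * b) := by rw [mul_assoc, hbc]
    _ = a * a := hab2

section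

variable (hleg : ∀ a b : S, a * b * a = a * b)
include hleg

theorem sqAbsorbs_refl (a : S) : SqAbsorbs a a := hleg a a

theorem mul_mul_self (a b : S) : a * b * (a * b) = a * (b * b) := by
  rw [← mul_assoc, hleg, mul_assoc]

theorem SqAbsorbs.mul_mul_eq {a b : S} (h : SqAbsorbs a b) (x : S) : a * x * b = a * x :=
  calc a * x * b = a * x * a * a * b := by rw [hleg, hleg]
    _ = a * x * (a * a * b) := by simp only [mul_assoc]
    _ = a * x * a * a := by rw [h]; simp only [mul_assoc]
    _ = a * x := by rw [hleg, hleg]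

theorem SqAbsorbs.mul_left {a b : S} (h : SqAbsorbs a b) (c : S) : SqAbsorbs (c * a) (c * b) :=
  calc c * a * (c * a) * (c * b) = c * (a * a) * c * b := by
        rw [mul_mul_self hleg]; simp only [mul_assoc]
    _ = c * (a * a * b) := by rw [hleg]; simp only [mul_assoc]
    _ = c * a * (c * a) := by rw [h, mul_mul_self hleg]

theorem SqAbsorbs.mul_right {a b : S} (h : SqAbsorbs a b) (c : S) : SqAbsorbs (a * c) (b * c) :=
  calc a * c * (a * c) * (b * c) = a * (c * c) * b * c := by
        rw [mul_mul_self hleg]; simp only [mul_assoc]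
    _ = a * (c * c * c) := by rw [h.mul_mul_eq hleg]; simp only [mul_assoc]
    _ = a * c * (a * c) := by rw [hleg, mul_mul_self hleg]

theorem sqAbsorbs_mul_comm (a b : S) : SqAbsorbs (a * b) (b * a) :=
  calc a * b * (a * b) * (b * a) = a * (b * b * b) * a := by
        rw [mul_mul_self hleg]; simp only [mul_assoc]
    _ = a * b * (a * b) := by rw [hleg, hleg, mul_mul_self hleg]

theorem sqAbsorbs_mul_self_left (a : S) : SqAbsorbs (a * a) a := by
  rw [SqAbsorbs, mul_assoc, hleg]

theorem sqAbsorbs_mul_self_right (a : S) : SqAbsorbs a (a * a) := by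
  rw [SqAbsorbs, ← mul_assoc, hleg, hleg]

def tau : Con S where
  r a b := SqAbsorbs a b ∧ SqAbsorbs b a
  iseqv := ⟨fun a => ⟨sqAbsorbs_refl hleg a, sqAbsorbs_refl hleg a⟩, And.symm,
    fun hab hbc => ⟨hab.1.trans hbc.1, hbc.2.trans hab.2⟩⟩
  mul' {_ b c _} hab hcd :=
    ⟨((hab.1.mul_right hleg c).trans (hcd.1.mul_left hleg b)),
      ((hcd.2.mul_left hleg b).trans (hab.2.mul_right hleg c))⟩

theorem tau_quotient_mul_comm (x y : (tau hleg).Quotient) : x * y = y * x :=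
  Con.induction_on₂ x y fun a b =>
    (Con.eq _).2 ⟨sqAbsorbs_mul_comm hleg a b, sqAbsorbs_mul_comm hleg b a⟩

theorem tau_quotient_mul_self (x : (tau hleg).Quotient) : x * x = x :=
  Con.induction_on x fun a =>
    (Con.eq _).2 ⟨sqAbsorbs_mul_self_left hleg a, sqAbsorbs_mul_self_right hleg a⟩

end

end LeftLegal

/-- In a left legal semigroup, the relation τ given by
(a,b) ∈ τ iff a²b = a² and b²a = b² is a congruence whose quotient is a
semilattice. -/
theorem stmt_15 {S : Type*} [Semigroup S]
    (hleg : ∀ a b : S, a * b * a = a * b) :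
    ∃ c : Con S,
      (∀ a b : S, c a b ↔ (a * a * b = a * a ∧ b * b * a = b * b)) ∧
      (∀ x y : c.Quotient, x * y = y * x) ∧
      (∀ x : c.Quotient, x * x = x) :=
  ⟨LeftLegal.tau hleg, fun _ _ => Iff.rfl, LeftLegal.tau_quotient_mul_comm hleg,
    LeftLegal.tau_quotient_mul_self hleg⟩
end

section
/- A left legal semigroup S is right separative if and only if it is weakly separative. -/
/-! In a left legal semigroup `a * b = b * b` already forces `b * a = b * b`, because
`b * a = b * a * b = b * (b * b) = b * b`. Hence the hypotheses of right separativity and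
those of weak separativity both say that `a * a`, `a * b`, `b * a` and `b * b` coincide. -/

theorem mul_rev_eq_mul_self_of_leftLegal {S : Type*} [Semigroup S]
    (hleg : ∀ a b : S, a * b * a = a * b) {a b : S} (h : a * b = b * b) : b * a = b * b :=
  calc b * a = b * a * b := (hleg b a).symm
    _ = b * (b * b) := by rw [mul_assoc, h]
    _ = b * b := by rw [← mul_assoc, hleg]

theorem rightSeparative_hyp_iff_weaklySeparative_hyp_of_leftLegal {S : Type*} [Semigroup S]
    (hleg : ∀ a b : S, a * b * a = a * b) (a b : S) :
    (a * b = b * b ∧ b * a = a * a) ↔ (a * a = a * b ∧ a * b = b * b) := by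
  constructor
  · rintro ⟨hab, hba⟩
    have hba' := mul_rev_eq_mul_self_of_leftLegal hleg hab
    exact ⟨by rw [hab, ← hba', hba], hab⟩
  · rintro ⟨haa, hab⟩
    have hba := mul_rev_eq_mul_self_of_leftLegal hleg hab
    exact ⟨hab, by rw [hba, ← hab, haa]⟩

/-- A left legal semigroup is right separative iff it is weakly
separative. -/
theorem stmt_17 {S : Type*} [Semigroup S]
    (hleg : ∀ a b : S, a * b * a = a * b) :
    (∀ a b : S, a * b = b * b → b * a = a * a → a = b) ↔
    (∀ a b : S, a * a = a * b → a * b = b * b → a = b) :=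
  forall₂_congr fun a b => by
    rw [← and_imp, ← and_imp, rightSeparative_hyp_iff_weaklySeparative_hyp_of_leftLegal hleg a b]
end

section
/- Every left separative left legal semigroup is commutative. -/
/-!
Left legality gives `b³ = b²`, so `b²` and `b` satisfy the hypotheses of left separativity and every
element is idempotent. In such a left regular band `(ab)(ba) = aba = ab = (ab)²`, and symmetrically
`(ba)(ab) = (ba)²`, so left separativity applied to `ab` and `ba` gives `ab = ba`.
-/

section LeftLegal

variable {S : Type*} [Semigroup S]

theorem mul_self_eq_of_leftLegal_of_leftSeparative (hleg : ∀ a b : S, a * b * a = a * b)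
    (hls : ∀ a b : S, a * b = a * a → b * a = b * b → a = b) (b : S) : b * b = b := by
  have hcube : b * b * b = b * b := hleg b b
  refine hls (b * b) b ?_ ?_
  · rw [hcube, ← mul_assoc, hcube, hcube]
  · rw [← mul_assoc, hcube]

theorem mul_mul_mul_swap_eq_mul_self_of_leftLegal (hleg : ∀ a b : S, a * b * a = a * b)
    (hidem : ∀ a : S, a * a = a) (a b : S) : a * b * (b * a) = a * b * (a * b) := by
  calc a * b * (b * a) = a * (b * b) * a := by simp only [mul_assoc]
    _ = a * b := by rw [hidem, hleg]
    _ = a * b * (a * b) := (hidem _).symm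

end LeftLegal

/-- Every left separative left legal semigroup is commutative. -/
theorem stmt_18 {S : Type*} [Semigroup S]
    (hleg : ∀ a b : S, a * b * a = a * b)
    (hls : ∀ a b : S, a * b = a * a → b * a = b * b → a = b) :
    ∀ a b : S, a * b = b * a := by
  have hidem := mul_self_eq_of_leftLegal_of_leftSeparative hleg hls
  intro a b
  exact hls (a * b) (b * a) (mul_mul_mul_swap_eq_mul_self_of_leftLegal hleg hidem a b)
    (mul_mul_mul_swap_eq_mul_self_of_leftLegal hleg hidem b a)
end
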